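/- arXiv:2310.09954 — 5 statements merged into one kernel-verified Lean document; each statement's English description precedes it below -/
import Mathlib

section
/- Let g ≥ 3 and r ≥ 1 be integers. There exists an integer d with 2r ≤ d ≤ g−1 such that ρ(g,r,d) < 0, ρ(g,r,d+1) ≥ 0, and ρ(g,r−1,d−1) ≥ 0 (i.e., an expected maximal Brill–Noether locus of rank r exists) if and only if r ≤ ⌈√g − 1⌉ in case g ≥ ⌊√g⌋² + ⌊√g⌋, and r ≤ ⌊√g − 1⌋ in case g < ⌊√g⌋² + ⌊√g⌋. -/
/-!
Writing `e = g - d + r`, the conditions `ρ(g,r,d) < 0 ≤ ρ(g,r,d+1)` say `(r+1)(e-1) ≤ g < (r+1)e`,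
which forces `e = ⌊g/(r+1)⌋ + 1`, i.e. `d = d_max(g,r)`. The remaining condition `ρ(g,r-1,d-1) ≥ 0`
reads `r e ≤ g`, which holds exactly when `r ≤ ⌊g/(r+1)⌋`, i.e. when `r(r+1) ≤ g`; the bounds on `d`
then come for free as soon as `g ≥ 3`. Finally, the largest `r` with `r(r+1) ≤ g` is `⌊√g⌋` or
`⌊√g⌋ - 1` according as `⌊√g⌋(⌊√g⌋+1) ≤ g` or not, which is what the two cases of the right-hand
side express.
-/

noncomputable section

/-- The Brill--Noether number `ρ(g,r,d) = g - (r+1)(g-d+r)`. -/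
def rho (g r d : ℤ) : ℤ := g - (r + 1) * (g - d + r)

/-- Pflueger's Brill--Noether number `ρ_k(g,r,d)`, the maximum of
`ρ(g,r-ℓ,d) - ℓk` over integers `0 ≤ ℓ ≤ min r (g-d+r-1)`. -/
def rhoK (g r d k : ℤ) : ℤ :=
  sSup ((fun ℓ : ℤ => rho g (r - ℓ) d - ℓ * k) '' Set.Icc 0 (min r (g - d + r - 1)))

/-- `κ(g,r,d)`: the greatest integer `k ≥ 1` such that `ρ_k(g,r,d) ≥ 0`. -/
def kappa (g r d : ℤ) : ℤ := sSup {k : ℤ | 1 ≤ k ∧ 0 ≤ rhoK g r d k}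

/-- `d_max(g,r) = r + ⌈gr/(r+1)⌉ - 1`, the largest `d` with `ρ(g,r,d) < 0`. -/
def dmax (g r : ℤ) : ℤ := r + ⌈((g : ℚ) * r) / ((r : ℚ) + 1)⌉ - 1

def IsExpectedMaximal (g r d : ℤ) : Prop :=
  2 * r ≤ d ∧ d ≤ g - 1 ∧ rho g r d < 0 ∧ 0 ≤ rho g r (d + 1) ∧ 0 ≤ rho g (r - 1) (d - 1)

lemma rho_sub_one_sub_one (g r d : ℤ) : rho g (r - 1) (d - 1) = g - r * (g - d + r) := by
  unfold rho; ring

lemma IsExpectedMaximal.mul_add_one_le {g r d : ℤ} (hr : 0 ≤ r) (h : IsExpectedMaximal g r d) :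
    r * (r + 1) ≤ g := by
  obtain ⟨-, hdg, -, -, hρ⟩ := h
  rw [rho_sub_one_sub_one] at hρ
  calc r * (r + 1) ≤ r * (g - d + r) := mul_le_mul_of_nonneg_left (by linarith) hr
    _ ≤ g := by linarith

lemma isExpectedMaximal_of_mul_add_one_le {g r : ℤ} (hg : 3 ≤ g) (hr : 1 ≤ r)
    (h : r * (r + 1) ≤ g) : IsExpectedMaximal g r (g + r - 1 - g / (r + 1)) := by
  set q := g / (r + 1)
  set t := g % (r + 1)
  have hdiv : (r + 1) * q + t = g := Int.mul_ediv_add_emod g (r + 1)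
  have ht0 : 0 ≤ t := Int.emod_nonneg g (by omega)
  have ht1 : t < r + 1 := Int.emod_lt_of_pos g (by omega)
  have hrq : r ≤ q := (Int.le_ediv_iff_mul_le (by omega)).2 (by linarith)
  have hgap : g - (g + r - 1 - q) + r = q + 1 := by ring
  refine ⟨?_, by omega, ?_, ?_, ?_⟩
  · -- `2r ≤ d` amounts to `r + 1 ≤ g - q = r q + t`
    rcases eq_or_lt_of_le hr with rfl | hr2
    · omega
    · nlinarith
  · rw [rho, hgap]; linarith
  · rw [rho, show g - (g + r - 1 - q + 1) + r = q by ring]; linarith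
  · rw [rho_sub_one_sub_one, hgap]; nlinarith

lemma exists_isExpectedMaximal_iff {g r : ℤ} (hg : 3 ≤ g) (hr : 1 ≤ r) :
    (∃ d, IsExpectedMaximal g r d) ↔ r * (r + 1) ≤ g :=
  ⟨fun ⟨_, h⟩ => h.mul_add_one_le (by omega),
    fun h => ⟨_, isExpectedMaximal_of_mul_add_one_le hg hr h⟩⟩

lemma le_iff_mul_add_one_le {g n r : ℤ} (hr : 0 ≤ r) (hn : n * (n + 1) ≤ g)
    (hg : g < (n + 1) * (n + 2)) : r ≤ n ↔ r * (r + 1) ≤ g := by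
  constructor
  · intro hrn
    nlinarith
  · intro hrg
    by_contra! hnr
    nlinarith

lemma floor_sqrt_sq_le {g : ℤ} (hg : 0 ≤ g) : ⌊√(g : ℝ)⌋ ^ 2 ≤ g := by
  have hm : ((⌊√(g : ℝ)⌋ : ℤ) : ℝ) ≤ √(g : ℝ) := Int.floor_le _
  rw [Real.le_sqrt (by exact_mod_cast Int.floor_nonneg.2 (Real.sqrt_nonneg _))
    (by exact_mod_cast hg)] at hm
  exact_mod_cast hm

lemma lt_floor_sqrt_add_one_sq (g : ℤ) : g < (⌊√(g : ℝ)⌋ + 1) ^ 2 := by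
  have hm : √(g : ℝ) < ((⌊√(g : ℝ)⌋ : ℤ) : ℝ) + 1 := Int.lt_floor_add_one _
  rw [Real.sqrt_lt' (by positivity)] at hm
  exact_mod_cast hm

lemma ceil_sqrt_eq_floor_sqrt_add_one {g : ℤ} (h : ⌊√(g : ℝ)⌋ ^ 2 < g) :
    ⌈√(g : ℝ)⌉ = ⌊√(g : ℝ)⌋ + 1 := by
  rw [Int.ceil_eq_iff]
  push_cast
  refine ⟨?_, (Int.lt_floor_add_one _).le⟩
  rw [add_sub_cancel_right, Real.lt_sqrt (by positivity)]
  exact_mod_cast h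

lemma sqrt_bound_iff {g r : ℤ} (hg : 0 < g) (hr : 0 ≤ r) :
    (if ⌊√(g : ℝ)⌋ ^ 2 + ⌊√(g : ℝ)⌋ ≤ g then r ≤ ⌈√(g : ℝ) - 1⌉ else r ≤ ⌊√(g : ℝ) - 1⌋) ↔
      r * (r + 1) ≤ g := by
  set m := ⌊√(g : ℝ)⌋ with hm
  have hm0 : 0 ≤ m := Int.floor_nonneg.2 (Real.sqrt_nonneg _)
  have hsq : m ^ 2 ≤ g := floor_sqrt_sq_le hg.le
  have hsq' : g < (m + 1) ^ 2 := lt_floor_sqrt_add_one_sq g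
  split_ifs with hcase
  · have hlt : m ^ 2 < g := by
      rcases eq_or_lt_of_le hm0 with h0 | h0
      · rw [← h0]; simpa using hg
      · nlinarith
    rw [Int.ceil_sub_one, ceil_sqrt_eq_floor_sqrt_add_one hlt, add_sub_cancel_right]
    exact le_iff_mul_add_one_le hr (by linarith) (by nlinarith)
  · rw [Int.floor_sub_one, ← hm]
    exact le_iff_mul_add_one_le hr (by nlinarith) (by linarith)

theorem stmt0 (g r : ℤ) (hg : 3 ≤ g) (hr : 1 ≤ r) :
    (∃ d : ℤ, 2 * r ≤ d ∧ d ≤ g - 1 ∧ rho g r d < 0 ∧ 0 ≤ rho g r (d + 1) ∧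
      0 ≤ rho g (r - 1) (d - 1)) ↔
    (if ⌊Real.sqrt (g : ℝ)⌋ ^ 2 + ⌊Real.sqrt (g : ℝ)⌋ ≤ g then r ≤ ⌈Real.sqrt (g : ℝ) - 1⌉
      else r ≤ ⌊Real.sqrt (g : ℝ) - 1⌋) :=
  (exists_isExpectedMaximal_iff hg hr).trans (sqrt_bound_iff (by omega) (by omega)).symm
end
end

section
/- Let g, r, d ≥ 1 be integers with d ≤ g − 1 and ρ(g,r,d) < 0. Then κ(g,r,d) = ⌊d/r⌋ if g + 1 > ⌊d/r⌋ + d, and κ(g,r,d) = g + 1 − γ(r,d) + ⌊−2√(−ρ(g,r,d))⌋ otherwise. -/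
noncomputable section

/-!
Since `ρ(g,r-ℓ,d) - ℓk ≥ 0` iff `k ≤ ⌊ρ(g,r-ℓ,d)/ℓ⌋`, and the term `ℓ = 0` is `ρ < 0`, `κ` is the
maximum over `1 ≤ ℓ ≤ r` of `⌊ρ(g,r-ℓ,d)/ℓ⌋ = g - d + 2r + 1 - (ℓ + ⌈p/ℓ⌉)`, where `p = -ρ(g,r,d)`.
If `⌊d/r⌋ ≤ g - d`, the maximum is attained at `ℓ = r`, where `ρ(g,0,d) = d`. Otherwise `p ≤ r²`,
and by AM-GM the least integer value of `ℓ + ⌈p/ℓ⌉` is `c = ⌈2√p⌉` (the least `c` with `c² ≥ 4p`),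
attained at `ℓ = ⌊c/2⌋ ≤ r`.
-/

open Set

lemma rho_zero (g d : ℤ) : rho g 0 d = d := by
  unfold rho; ring

lemma rho_sub (g r d ℓ : ℤ) :
    rho g (r - ℓ) d = rho g r d + (g - d + 2 * r + 1 - ℓ) * ℓ := by
  unfold rho; ring

lemma rho_sub_ediv (g r d : ℤ) {ℓ : ℤ} (hℓ : ℓ ≠ 0) :
    rho g (r - ℓ) d / ℓ = rho g r d / ℓ + (g - d + 2 * r + 1 - ℓ) := by
  rw [rho_sub, Int.add_mul_ediv_right _ _ hℓ]

lemma rhoK_nonneg_iff {g r d : ℤ} (k : ℤ) (hr : 0 ≤ r) (hdg : d ≤ g - 1) (hrho : rho g r d < 0) :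
    0 ≤ rhoK g r d k ↔ ∃ ℓ ∈ Icc 1 r, k ≤ rho g (r - ℓ) d / ℓ := by
  have hmin : min r (g - d + r - 1) = r := min_eq_left (by omega)
  set F : ℤ → ℤ := fun ℓ => rho g (r - ℓ) d - ℓ * k
  have hfin : (F '' Icc 0 r).Finite := (finite_Icc 0 r).image F
  have hne : (F '' Icc 0 r).Nonempty := (nonempty_Icc.mpr hr).image F
  rw [rhoK, hmin, ← not_lt, hfin.csSup_lt_iff hne]
  simp only [forall_mem_image, not_forall, not_lt, exists_prop, F]
  constructor
  · rintro ⟨ℓ, ⟨hℓ0, hℓr⟩, hF⟩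
    have hℓ1 : 1 ≤ ℓ := by
      by_contra! h
      obtain rfl : ℓ = 0 := by omega
      simp only [sub_zero, zero_mul] at hF
      omega
    exact ⟨ℓ, ⟨hℓ1, hℓr⟩, (Int.le_ediv_iff_mul_le hℓ1).mpr (by linarith)⟩
  · rintro ⟨ℓ, ⟨hℓ1, hℓr⟩, hk⟩
    have := (Int.le_ediv_iff_mul_le hℓ1).mp hk
    exact ⟨ℓ, ⟨by omega, hℓr⟩, by linarith⟩

lemma kappa_eq_of_isGreatest {g r d K : ℤ} (hr : 0 < r) (hd : 0 ≤ d) (hdg : d ≤ g - 1)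
    (hrho : rho g r d < 0) (hmax : IsGreatest ((fun ℓ => rho g (r - ℓ) d / ℓ) '' Icc 1 r) K) :
    kappa g r d = K := by
  have hK : 0 ≤ K := calc
    0 ≤ d / r := Int.ediv_nonneg hd hr.le
    _ = rho g (r - r) d / r := by rw [sub_self, rho_zero]
    _ ≤ K := hmax.2 (mem_image_of_mem _ ⟨hr, le_rfl⟩)
  have hset : {k : ℤ | 1 ≤ k ∧ 0 ≤ rhoK g r d k} = Icc 1 K := by
    ext k
    simp only [mem_ofPred_eq, mem_Icc, rhoK_nonneg_iff k hr.le hdg hrho]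
    obtain ⟨⟨ℓ₀, hℓ₀, hK_eq⟩, hub⟩ := hmax
    refine and_congr_right fun _ => ⟨?_, fun hkK => ⟨ℓ₀, hℓ₀, hkK.trans hK_eq.ge⟩⟩
    rintro ⟨ℓ, hℓ, hk⟩
    exact hk.trans (hub (mem_image_of_mem _ hℓ))
  rw [kappa, hset]
  -- `K ≥ 0` matters: `sSup ∅ = 0` in `ℤ`.
  rcases hK.lt_or_eq with hK1 | rfl
  · exact csSup_Icc hK1
  · rw [Icc_eq_empty (by omega), Int.csSup_empty]

lemma isGreatest_of_ediv_le_sub {g r d : ℤ} (hr : 0 < r) (hdg : d / r ≤ g - d) :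
    IsGreatest ((fun ℓ => rho g (r - ℓ) d / ℓ) '' Icc 1 r) (d / r) := by
  refine ⟨⟨r, ⟨hr, le_rfl⟩, by simp [rho_zero]⟩, ?_⟩
  rintro _ ⟨ℓ, ⟨hℓ1, hℓr⟩, rfl⟩
  have hd_lt : d < (d / r + 1) * r := Int.lt_ediv_add_one_mul_self d hr
  rw [Int.ediv_le_iff_le_mul hℓ1]
  -- with `s = r - ℓ`, `ρ(g,s,d) = d - s (g - d + s + 1)` and `(g - d + s + 1) ≥ ⌊d/r⌋ + 1`
  unfold rho
  nlinarith [mul_nonneg (sub_nonneg.mpr hℓr) (show 0 ≤ g - d - d / r + (r - ℓ) by omega)]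

lemma neg_ediv_sub_le_of_sq_lt {p c ℓ : ℤ} (hc : (c - 1) ^ 2 < 4 * p) (hℓ : 0 < ℓ) :
    -p / ℓ - ℓ ≤ -c := by
  by_contra! h
  have := (Int.le_ediv_iff_mul_le hℓ).mp (show ℓ - c + 1 ≤ -p / ℓ by omega)
  nlinarith [sq_nonneg (c - 1 - 2 * ℓ)]

lemma le_neg_ediv_half_sub_half {p c : ℤ} (hc : 4 * p ≤ c ^ 2) (hc2 : 2 ≤ c) :
    -c ≤ -p / (c / 2) - c / 2 := by
  have hℓ : 0 < c / 2 := by omega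
  suffices (c / 2 - c) * (c / 2) ≤ -p by
    have := (Int.le_ediv_iff_mul_le hℓ).mpr this
    omega
  rcases Int.emod_two_eq_zero_or_one c with h | h <;>
    · have hc_eq : c = 2 * (c / 2) + c % 2 := (Int.mul_ediv_add_emod c 2).symm
      rw [h] at hc_eq
      nlinarith

lemma ceil_two_mul_sqrt_sq_bounds {p : ℤ} (hp : 0 < p) :
    2 ≤ ⌈2 * √(p : ℝ)⌉ ∧ 4 * p ≤ ⌈2 * √(p : ℝ)⌉ ^ 2 ∧ (⌈2 * √(p : ℝ)⌉ - 1) ^ 2 < 4 * p := by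
  set c := ⌈2 * √(p : ℝ)⌉
  have hp1 : (1 : ℝ) ≤ p := by exact_mod_cast hp
  have hsq : √(p : ℝ) ^ 2 = p := Real.sq_sqrt (by positivity)
  have hs1 : 1 ≤ √(p : ℝ) := Real.one_le_sqrt.mpr hp1
  have hle : 2 * √(p : ℝ) ≤ c := Int.le_ceil _
  have hlt : (c : ℝ) < 2 * √(p : ℝ) + 1 := Int.ceil_lt_add_one _
  have hc2 : 2 ≤ c := by exact_mod_cast (show (2 : ℝ) ≤ c by linarith)
  refine ⟨hc2, ?_, ?_⟩
  · have : (4 * p : ℝ) ≤ (c : ℝ) ^ 2 := by nlinarith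
    exact_mod_cast this
  · have : ((c : ℝ) - 1) ^ 2 < 4 * p := by
      have : (1 : ℝ) ≤ c - 1 := by exact_mod_cast (show 1 ≤ c - 1 by omega)
      nlinarith
    exact_mod_cast this

lemma isGreatest_neg_ediv_sub {p r : ℤ} (hp : 0 < p) (hr : 0 ≤ r) (hpr : p ≤ r ^ 2) :
    IsGreatest ((fun ℓ => -p / ℓ - ℓ) '' Icc 1 r) (-⌈2 * √(p : ℝ)⌉) := by
  obtain ⟨hc2, hc_sq, hc_sq'⟩ := ceil_two_mul_sqrt_sq_bounds hp
  have hcr : ⌈2 * √(p : ℝ)⌉ ≤ 2 * r := by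
    have : √(p : ℝ) ≤ r := (Real.sqrt_le_left (by exact_mod_cast hr)).mpr (by exact_mod_cast hpr)
    exact Int.ceil_le.mpr (by push_cast; linarith)
  refine ⟨⟨⌈2 * √(p : ℝ)⌉ / 2, ⟨by omega, by omega⟩, ?_⟩, ?_⟩
  · exact le_antisymm (neg_ediv_sub_le_of_sq_lt hc_sq' (by omega)) (le_neg_ediv_half_sub_half hc_sq hc2)
  · rintro _ ⟨ℓ, ⟨hℓ1, -⟩, rfl⟩
    exact neg_ediv_sub_le_of_sq_lt hc_sq' hℓ1

lemma isGreatest_of_sub_lt_ediv {g r d : ℤ} (hr : 0 < r) (hrho : rho g r d < 0)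
    (hdg : g - d < d / r) :
    IsGreatest ((fun ℓ => rho g (r - ℓ) d / ℓ) '' Icc 1 r)
      (g - d + 2 * r + 1 - ⌈2 * √((-rho g r d : ℤ) : ℝ)⌉) := by
  have hd_ge : r * (d / r) ≤ d := Int.mul_ediv_self_le hr.ne'
  have hpr : -rho g r d ≤ r ^ 2 := by
    unfold rho
    nlinarith
  have himage : (fun ℓ => rho g (r - ℓ) d / ℓ) '' Icc 1 r =
      (g - d + 2 * r + 1 + ·) '' ((fun ℓ => -(-rho g r d) / ℓ - ℓ) '' Icc 1 r) := by
    rw [image_image]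
    refine image_congr fun ℓ ⟨hℓ1, _⟩ => ?_
    rw [neg_neg, rho_sub_ediv g r d (by omega : ℓ ≠ 0)]
    ring
  rw [himage, sub_eq_add_neg]
  exact (monotone_id.const_add _).map_isGreatest (isGreatest_neg_ediv_sub (by omega) hr.le hpr)

theorem stmt2_general (g r d : ℤ) (hr : 1 ≤ r) (hd : 1 ≤ d)
    (hdg : d ≤ g - 1) (hrho : rho g r d < 0) :
    kappa g r d =
      if g + 1 > d / r + d then d / r
      else g + 1 - (d - 2 * r) + ⌊(-2 : ℝ) * Real.sqrt ((-(rho g r d) : ℤ) : ℝ)⌋ := by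
  split_ifs with hcase
  · exact kappa_eq_of_isGreatest hr (by omega) hdg hrho (isGreatest_of_ediv_le_sub hr (by omega))
  · rw [neg_mul, Int.floor_neg, kappa_eq_of_isGreatest hr (by omega) hdg hrho
      (isGreatest_of_sub_lt_ediv hr hrho (by omega))]
    ring

theorem stmt2 (g r d : ℤ) (hg : 1 ≤ g) (hr : 1 ≤ r) (hd : 1 ≤ d)
    (hdg : d ≤ g - 1) (hrho : rho g r d < 0) :
    kappa g r d =
      if g + 1 > d / r + d then d / r
      else g + 1 - (d - 2 * r) + ⌊(-2 : ℝ) * Real.sqrt ((-(rho g r d) : ℤ) : ℝ)⌋ :=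
  stmt2_general g r d hr hd hdg hrho

end
end

section
/- Let g, r, d, s, e be positive integers. If ρ(g,r,d) = ρ(g,s,e) and γ(r,d) = γ(s,e), then either (i) r = s and d = e, or (ii) s = g − d + r − 1 and e = 2g − 2 − d. -/
noncomputable section

theorem rho_sub_rho_of_clifford_eq {g r d s e : ℤ} (h : d - 2 * r = e - 2 * s) :
    rho g s e - rho g r d = (r - s) * (g - d + r - s - 1) := by
  obtain rfl : e = d - 2 * r + 2 * s := by linarith
  unfold rho
  ring

theorem stmt4_general (g r d s e : ℤ)
    (h1 : rho g r d = rho g s e) (h2 : d - 2 * r = e - 2 * s) :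
    (r = s ∧ d = e) ∨ (s = g - d + r - 1 ∧ e = 2 * g - 2 - d) := by
  have key : (r - s) * (g - d + r - s - 1) = 0 := by
    rw [← rho_sub_rho_of_clifford_eq h2, h1, sub_self]
  rcases mul_eq_zero.mp key with h | h
  · left
    omega
  · right
    omega

theorem stmt4 (g r d s e : ℤ) (hg : 1 ≤ g) (hr : 1 ≤ r) (hd : 1 ≤ d)
    (hs : 1 ≤ s) (he : 1 ≤ e)
    (h1 : rho g r d = rho g s e) (h2 : d - 2 * r = e - 2 * s) :
    (r = s ∧ d = e) ∨ (s = g - d + r - 1 ∧ e = 2 * g - 2 - d) :=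
  stmt4_general g r d s e h1 h2
end
end

section
/- Let g, r ≥ 1 and δ ≥ 1 be integers with g ≥ (r+δ)(r+δ+1) (so that both d_max(g,r) ≤ g−1 and d_max(g,r+δ) ≤ g−1). Define the real number f(g,r,δ) = (r+1)δ² + ((r+1)(r+1+2√(r+1)) − g)δ + 2(r+1)²√(r+1). If f(g,r,δ) ≤ 0, then κ(g,r,d_max(g,r)) > κ(g,r+δ,d_max(g,r+δ)). -/
noncomputable section

/-!
Write `g = (r + 1) q + s` with `0 ≤ s ≤ r` and put `c = r + 1 - s ∈ [1, r + 1]`. Then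
`d_max(g, r) = g + r - q - 1`, and when `r ≤ q` one computes
`ρ(g, r - ℓ, d_max) - ℓk = ℓ (q + r + 2 - ℓ - k) - c`, so that
`κ(g, r, d_max) = q + r + 2 - min_{1 ≤ ℓ ≤ r} (ℓ + ⌈c / ℓ⌉)`.
By AM-GM this minimum is at least `2√c`, and choosing `ℓ` within `1` of `√c` shows it is at most
`2√c + 1`; hence `κ` lies within `1` below `q + r + 2 - 2√c`. Comparing these estimates at `r` and
at `r + δ`, the condition `f(g, r, δ) ≤ 0` is exactly what makes them differ by more than `1`.
-/

section Real

lemma two_sqrt_le_add_of_le_mul {a b c : ℝ} (ha : 0 ≤ a) (hb : 0 ≤ b) (h : c ≤ a * b) :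
    2 * √c ≤ a + b :=
  calc 2 * √c ≤ 2 * (√a * √b) := by rw [← Real.sqrt_mul ha]; gcongr
    _ ≤ √a ^ 2 + √b ^ 2 := by rw [← mul_assoc]; exact two_mul_le_add_sq _ _
    _ = a + b := by rw [Real.sq_sqrt ha, Real.sq_sqrt hb]

lemma two_sqrt_sub_div_le_two_sqrt_sub_div {a b n : ℝ} (ha : 0 ≤ a) (hab : a ≤ b) (hbn : b ≤ n)
    (hn : 1 ≤ n) : 2 * √a - a / n ≤ 2 * √b - b / n := by
  have hsa : √a ≤ √b := Real.sqrt_le_sqrt hab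
  have hsb : √b ≤ n := Real.sqrt_le_iff.2 ⟨by linarith, by nlinarith⟩
  have key : b - a ≤ 2 * n * (√b - √a) := by
    nlinarith [Real.sq_sqrt ha, Real.sq_sqrt (ha.trans hab), Real.sqrt_nonneg a]
  have : (b - a) / n ≤ 2 * (√b - √a) := by
    rw [div_le_iff₀ (by linarith)]; linarith
  rw [sub_div] at this
  linarith

lemma exists_int_mem_Icc_abs_sub_le_one {r : ℤ} {x : ℝ} (hr : 1 ≤ r) (hx : 1 ≤ x)
    (hxr : x ≤ r + 1) : ∃ ℓ : ℤ, 1 ≤ ℓ ∧ ℓ ≤ r ∧ |ℓ - x| ≤ 1 := by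
  refine ⟨min r ⌈x⌉, le_min hr (Int.one_le_ceil_iff.2 (by linarith)), min_le_left _ _, ?_⟩
  rcases le_total r ⌈x⌉ with h | h
  · have := Int.le_ceil_iff.1 h
    rw [min_eq_left h, abs_le]
    constructor <;> linarith
  · have := Int.le_ceil x
    have := Int.ceil_lt_add_one x
    rw [min_eq_right h, abs_le]
    constructor <;> linarith

/-- With `t` standing for `⌈c / ℓ⌉`: `min_{1 ≤ ℓ ≤ r} (ℓ + ⌈c / ℓ⌉) ≤ 2√c + 1`. -/
lemma exists_add_le_two_sqrt_add_one {r c : ℤ} (hr : 1 ≤ r) (hc : 1 ≤ c) (hcr : c ≤ r + 1) :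
    ∃ ℓ t : ℤ, 1 ≤ ℓ ∧ ℓ ≤ r ∧ t ≤ c ∧ c ≤ ℓ * t ∧ (ℓ + t : ℝ) ≤ 2 * √c + 1 := by
  have hc1 : (1 : ℝ) ≤ c := by exact_mod_cast hc
  have hsc : 1 ≤ √(c : ℝ) := Real.one_le_sqrt.2 hc1
  have hscr : √(c : ℝ) ≤ r + 1 :=
    Real.sqrt_le_iff.2 ⟨by positivity, by nlinarith [(by exact_mod_cast hcr : (c : ℝ) ≤ r + 1)]⟩
  obtain ⟨ℓ, hℓ1, hℓr, hℓ⟩ := exists_int_mem_Icc_abs_sub_le_one hr hsc hscr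
  have hup : ℓ * ((c + ℓ - 1) / ℓ) ≤ c + ℓ - 1 := Int.mul_ediv_self_le (by omega)
  have hlo : c + ℓ - 1 < ℓ * ((c + ℓ - 1) / ℓ) + ℓ := Int.lt_mul_ediv_self_add (by omega)
  refine ⟨ℓ, (c + ℓ - 1) / ℓ, hℓ1, hℓr, by nlinarith, by linarith, ?_⟩
  set t := (c + ℓ - 1) / ℓ
  have hℓ0 : (0 : ℝ) < ℓ := by exact_mod_cast (by omega : (0 : ℤ) < ℓ)
  have hupR : (ℓ : ℝ) * t ≤ c + ℓ - 1 := by exact_mod_cast hup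
  have hsq : ((ℓ : ℝ) - √c) ^ 2 ≤ 1 := by
    rw [← sq_abs]; nlinarith [abs_nonneg ((ℓ : ℝ) - √c)]
  have : (ℓ : ℝ) * (ℓ + t) ≤ ℓ * (2 * √c + 1) := by
    nlinarith [Real.sq_sqrt (by linarith : (0 : ℝ) ≤ c)]
  exact le_of_mul_le_mul_left this hℓ0

/-- The comparison of `kappaEstimate` at `r` and `r + δ`: here `n = r + 1`, `m = r + δ + 1`,
`p` and `q` are the quotients of `g` by `n` and `m`, and `c = n - g % n`, `e = m - g % m`. -/
lemma add_sub_two_sqrt_lt {n m g p q c e : ℝ} (hn : 1 ≤ n) (hnm : n < m)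
    (hp : n * (p + 1) = g + c) (hq : m * (q + 1) = g + e) (hc : 0 ≤ c) (hcn : c ≤ n)
    (he : 1 ≤ e) (hem : e ≤ m) (hf : (m - n + 2 * √n) * (n * m) ≤ g * (m - n)) :
    q + m + 1 - 2 * √e < p + n - 2 * √c := by
  have hn0 : 0 < n := by linarith
  have hm0 : 0 < m := by linarith
  have hp' : p + 1 = g / n + c / n := by
    rw [← add_div, eq_div_iff hn0.ne']; linarith
  have hq' : q + 1 = g / m + e / m := by
    rw [← add_div, eq_div_iff hm0.ne']; linarith
  have hf' : m - n + 2 * √n ≤ g / n - g / m := by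
    rw [div_sub_div _ _ hn0.ne' hm0.ne', le_div_iff₀ (by positivity)]; linarith
  have hcn' := two_sqrt_sub_div_le_two_sqrt_sub_div hc hcn le_rfl hn
  have hem' := two_sqrt_sub_div_le_two_sqrt_sub_div zero_le_one he hem (by linarith)
  rw [div_self hn0.ne'] at hcn'
  rw [Real.sqrt_one] at hem'
  have : 1 / m < 1 := by rw [div_lt_one hm0]; linarith
  linarith

end Real

section DMax

variable {g r : ℤ}

lemma succ_sub_emod_mem_Icc (hr : 0 ≤ r) : r + 1 - g % (r + 1) ∈ Set.Icc 1 (r + 1) := by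
  have := Int.emod_nonneg g (by omega : r + 1 ≠ 0)
  have := Int.emod_lt_of_pos g (by omega : 0 < r + 1)
  constructor <;> omega

lemma le_ediv_succ (hr : 0 ≤ r) (hg : r * (r + 1) ≤ g) : r ≤ g / (r + 1) :=
  (Int.le_ediv_iff_mul_le (by omega)).2 hg

lemma dmax_eq (hr : 0 ≤ r) : dmax g r = g + r - g / (r + 1) - 1 := by
  have hr1 : (0 : ℚ) < r + 1 := by exact_mod_cast (by omega : (0 : ℤ) < r + 1)
  have hdiv := Int.mul_ediv_add_emod g (r + 1)
  have hc := succ_sub_emod_mem_Icc (g := g) hr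
  suffices ⌈(g : ℚ) * r / (r + 1)⌉ = g - g / (r + 1) by rw [dmax, this]; ring
  rw [Int.ceil_eq_iff, lt_div_iff₀ hr1, div_le_iff₀ hr1]
  constructor
  · exact_mod_cast (by linarith [hc.1] : (g - g / (r + 1) - 1) * (r + 1) < g * r)
  · exact_mod_cast (by linarith [hc.2] : g * r ≤ (g - g / (r + 1)) * (r + 1))

lemma rho_dmax_sub (hr : 0 ≤ r) (ℓ k : ℤ) :
    rho g (r - ℓ) (dmax g r) - ℓ * k =
      ℓ * (g / (r + 1) + r + 2 - ℓ - k) - (r + 1 - g % (r + 1)) := by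
  rw [rho, dmax_eq hr]
  linear_combination (-1 : ℤ) * Int.mul_ediv_add_emod g (r + 1)

lemma zero_le_rhoK_iff {d k : ℤ} (h : 0 ≤ min r (g - d + r - 1)) :
    0 ≤ rhoK g r d k ↔
      ∃ ℓ ∈ Set.Icc 0 (min r (g - d + r - 1)), 0 ≤ rho g (r - ℓ) d - ℓ * k := by
  unfold rhoK
  set f : ℤ → ℤ := fun ℓ => rho g (r - ℓ) d - ℓ * k
  have hfin : (f '' Set.Icc 0 (min r (g - d + r - 1))).Finite := (Set.finite_Icc _ _).image f
  constructor
  · intro h0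
    obtain ⟨ℓ, hℓ, hmax⟩ := ((Set.nonempty_Icc.2 h).image f).csSup_mem hfin
    refine ⟨ℓ, hℓ, ?_⟩
    change 0 ≤ f ℓ
    rwa [hmax]
  · rintro ⟨ℓ, hℓ, h0⟩
    exact h0.trans (le_csSup hfin.bddAbove (Set.mem_image_of_mem f hℓ))

lemma zero_le_rhoK_dmax_iff {k : ℤ} (hr : 0 ≤ r) (hg : r * (r + 1) ≤ g) :
    0 ≤ rhoK g r (dmax g r) k ↔
      ∃ ℓ, 1 ≤ ℓ ∧ ℓ ≤ r ∧ r + 1 - g % (r + 1) ≤ ℓ * (g / (r + 1) + r + 2 - ℓ - k) := by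
  have hmin : min r (g - dmax g r + r - 1) = r := by
    rw [dmax_eq hr, min_eq_left]; linarith [le_ediv_succ hr hg]
  have hc := (succ_sub_emod_mem_Icc (g := g) hr).1
  rw [zero_le_rhoK_iff (by omega), hmin]
  simp_rw [rho_dmax_sub hr]
  constructor
  · rintro ⟨ℓ, ⟨hℓ0, hℓr⟩, hℓ⟩
    rcases hℓ0.eq_or_lt with rfl | hℓ1
    · linarith
    · exact ⟨ℓ, hℓ1, hℓr, by linarith⟩
  · rintro ⟨ℓ, hℓ1, hℓr, hℓ⟩
    exact ⟨ℓ, ⟨by omega, hℓr⟩, by linarith⟩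

lemma isGreatest_kappa_dmax (hr : 1 ≤ r) (hg : r * (r + 1) ≤ g) :
    IsGreatest {k | 1 ≤ k ∧ 0 ≤ rhoK g r (dmax g r) k} (kappa g r (dmax g r)) := by
  have hq := le_ediv_succ (by omega) hg
  have hc := succ_sub_emod_mem_Icc (g := g) (by omega : 0 ≤ r)
  have hne : 1 ∈ {k | 1 ≤ k ∧ 0 ≤ rhoK g r (dmax g r) k} :=
    ⟨le_rfl, (zero_le_rhoK_dmax_iff (by omega) hg).2 ⟨r, hr, le_rfl, by nlinarith [hc.2]⟩⟩
  have hbdd : BddAbove {k | 1 ≤ k ∧ 0 ≤ rhoK g r (dmax g r) k} := by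
    refine ⟨g / (r + 1) + r, fun k ⟨_, hk⟩ => ?_⟩
    obtain ⟨ℓ, hℓ1, hℓr, hℓ⟩ := (zero_le_rhoK_dmax_iff (by omega) hg).1 hk
    by_contra! hlt
    nlinarith [hc.1]
  exact ⟨Int.csSup_mem ⟨1, hne⟩ hbdd, fun k hk => le_csSup hbdd hk⟩

/-- With `q = g / (r + 1)` and `c = r + 1 - g % (r + 1)`, the value `q + r + 2 - 2√c`, which
`κ(g, r, d_max(g, r))` approximates from below within `1`. -/
def kappaEstimate (g r : ℤ) : ℝ :=
  ((g / (r + 1) : ℤ) : ℝ) + r + 2 - 2 * √((r + 1 - g % (r + 1) : ℤ) : ℝ)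

lemma kappa_dmax_le_kappaEstimate (hr : 1 ≤ r) (hg : r * (r + 1) ≤ g) :
    (kappa g r (dmax g r) : ℝ) ≤ kappaEstimate g r := by
  obtain ⟨-, hk⟩ := (isGreatest_kappa_dmax hr hg).1
  obtain ⟨ℓ, hℓ1, -, hℓ⟩ := (zero_le_rhoK_dmax_iff (by omega) hg).1 hk
  have hc := (succ_sub_emod_mem_Icc (g := g) (by omega : 0 ≤ r)).1
  have hm : 0 ≤ g / (r + 1) + r + 2 - ℓ - kappa g r (dmax g r) := by nlinarith
  have := two_sqrt_le_add_of_le_mul (a := ℓ)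
    (b := ((g / (r + 1) + r + 2 - ℓ - kappa g r (dmax g r) : ℤ) : ℝ))
    (c := ((r + 1 - g % (r + 1) : ℤ) : ℝ))
    (by exact_mod_cast (by omega : (0 : ℤ) ≤ ℓ)) (by exact_mod_cast hm) (by exact_mod_cast hℓ)
  rw [kappaEstimate]
  push_cast at this ⊢
  linarith

lemma kappaEstimate_sub_one_le_kappa_dmax (hr : 1 ≤ r) (hg : r * (r + 1) ≤ g) :
    kappaEstimate g r - 1 ≤ kappa g r (dmax g r) := by
  have hq := le_ediv_succ (by omega) hg
  obtain ⟨hc1, hc2⟩ := succ_sub_emod_mem_Icc (g := g) (by omega : 0 ≤ r)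
  obtain ⟨ℓ, t, hℓ1, hℓr, htc, hℓt, hsum⟩ := exists_add_le_two_sqrt_add_one hr hc1 hc2
  have hk : g / (r + 1) + r + 2 - ℓ - t ≤ kappa g r (dmax g r) := by
    refine (isGreatest_kappa_dmax hr hg).2 ⟨by omega, ?_⟩
    exact (zero_le_rhoK_dmax_iff (by omega) hg).2 ⟨ℓ, hℓ1, hℓr, by convert hℓt using 2; ring⟩
  have hkR : ((g / (r + 1) : ℤ) : ℝ) + r + 2 - ℓ - t ≤ kappa g r (dmax g r) := by
    exact_mod_cast hk
  rw [kappaEstimate]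
  linarith

lemma kappaEstimate_add_lt {δ : ℤ} (hr : 0 ≤ r) (hδ : 1 ≤ δ)
    (hf : ((r : ℝ) + 1) * (δ : ℝ) ^ 2 +
        (((r : ℝ) + 1) * ((r : ℝ) + 1 + 2 * √((r : ℝ) + 1)) - (g : ℝ)) * (δ : ℝ) +
        2 * ((r : ℝ) + 1) ^ 2 * √((r : ℝ) + 1) ≤ 0) :
    kappaEstimate g (r + δ) < kappaEstimate g r - 1 := by
  obtain ⟨hc1, hc2⟩ := succ_sub_emod_mem_Icc (g := g) hr
  obtain ⟨hc1', hc2'⟩ := succ_sub_emod_mem_Icc (g := g) (by omega : 0 ≤ r + δ)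
  have hdiv (n : ℤ) : ((n : ℝ) + 1) * (((g / (n + 1) : ℤ) : ℝ) + 1) =
      g + ((n + 1 - g % (n + 1) : ℤ) : ℝ) := by
    exact_mod_cast (by linear_combination Int.mul_ediv_add_emod g (n + 1) :
      (n + 1) * (g / (n + 1) + 1) = g + (n + 1 - g % (n + 1)))
  have hδR : (1 : ℝ) ≤ δ := by exact_mod_cast hδ
  have := add_sub_two_sqrt_lt (n := (r : ℝ) + 1) (m := ((r + δ : ℤ) : ℝ) + 1)
    (by exact_mod_cast (by omega : (1 : ℤ) ≤ r + 1)) (by push_cast; linarith)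
    (hdiv r) (hdiv (r + δ))
    (by exact_mod_cast (by omega : (0 : ℤ) ≤ r + 1 - g % (r + 1))) (by exact_mod_cast hc2)
    (by exact_mod_cast hc1') (by exact_mod_cast hc2') (by push_cast; linear_combination hf)
  rw [kappaEstimate, kappaEstimate]
  push_cast at this ⊢
  linarith

end DMax

theorem stmt11_general (g r δ : ℤ) (hr : 1 ≤ r) (hδ : 1 ≤ δ)
    (h : (r + δ) * (r + δ + 1) ≤ g)
    (hf : ((r : ℝ) + 1) * (δ : ℝ) ^ 2 +
        (((r : ℝ) + 1) * ((r : ℝ) + 1 + 2 * Real.sqrt ((r : ℝ) + 1)) - (g : ℝ)) * (δ : ℝ) +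
        2 * ((r : ℝ) + 1) ^ 2 * Real.sqrt ((r : ℝ) + 1) ≤ 0) :
    kappa g (r + δ) (dmax g (r + δ)) < kappa g r (dmax g r) := by
  have hg : r * (r + 1) ≤ g := le_trans (by nlinarith) h
  have hupper := kappa_dmax_le_kappaEstimate (by omega : 1 ≤ r + δ) h
  have hgap := kappaEstimate_add_lt (by omega) hδ hf
  have hlower := kappaEstimate_sub_one_le_kappa_dmax hr hg
  exact_mod_cast hupper.trans_lt (hgap.trans_le hlower)

theorem stmt11 (g r δ : ℤ) (hg : 1 ≤ g) (hr : 1 ≤ r) (hδ : 1 ≤ δ)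
    (h : (r + δ) * (r + δ + 1) ≤ g)
    (hf : ((r : ℝ) + 1) * (δ : ℝ) ^ 2 +
        (((r : ℝ) + 1) * ((r : ℝ) + 1 + 2 * Real.sqrt ((r : ℝ) + 1)) - (g : ℝ)) * (δ : ℝ) +
        2 * ((r : ℝ) + 1) ^ 2 * Real.sqrt ((r : ℝ) + 1) ≤ 0) :
    kappa g (r + δ) (dmax g (r + δ)) < kappa g r (dmax g r) :=
  stmt11_general g r δ hr hδ h hf
end
end

section
/- One has κ(20, 3, 17) = 6 and κ(20, 4, 19) = 5; in particular κ(20,3,17) > κ(20,4,19). -/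
noncomputable section

/-! For fixed `(g, r, d)`, `k ↦ ρ_k` is antitone, so `κ = k` as soon as `ρ_k ≥ 0 > ρ_{k+1}`;
for the two triples at hand each of these inequalities is a check over at most five values of `ℓ`. -/

section Pflueger

variable {g r d : ℤ}

theorem le_rhoK {ℓ : ℤ} (hℓ : ℓ ∈ Set.Icc 0 (min r (g - d + r - 1))) (k : ℤ) :
    rho g (r - ℓ) d - ℓ * k ≤ rhoK g r d k :=
  le_csSup ((Set.finite_Icc _ _).image _).bddAbove (Set.mem_image_of_mem _ hℓ)

theorem rhoK_le {k c : ℤ} (hne : 0 ≤ min r (g - d + r - 1))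
    (h : ∀ ℓ ∈ Set.Icc 0 (min r (g - d + r - 1)), rho g (r - ℓ) d - ℓ * k ≤ c) :
    rhoK g r d k ≤ c :=
  csSup_le ((Set.nonempty_Icc.2 hne).image _) (Set.forall_mem_image.2 h)

theorem rhoK_antitone (hne : 0 ≤ min r (g - d + r - 1)) : Antitone (rhoK g r d) :=
  fun _ _ hkk' => rhoK_le hne fun _ hℓ =>
    (sub_le_sub_left (mul_le_mul_of_nonneg_left hkk' hℓ.1) _).trans (le_rhoK hℓ _)

theorem kappa_eq_of_rhoK {k : ℤ} (hne : 0 ≤ min r (g - d + r - 1)) (hk : 1 ≤ k)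
    (hnonneg : 0 ≤ rhoK g r d k) (hneg : rhoK g r d (k + 1) < 0) : kappa g r d = k := by
  refine IsGreatest.csSup_eq ⟨⟨hk, hnonneg⟩, fun k' ⟨_, hk'⟩ => ?_⟩
  by_contra! hlt
  exact (rhoK_antitone hne (Int.add_one_le_of_lt hlt) |>.trans_lt hneg).not_ge hk'

end Pflueger

theorem kappa_20_3_17 : kappa 20 3 17 = 6 := by
  refine kappa_eq_of_rhoK (by norm_num) (by norm_num)
    ((le_rhoK (ℓ := 2) (by norm_num) 6).trans' (by norm_num [rho])) ?_
  refine (rhoK_le (c := -1) (by norm_num) fun ℓ ⟨hℓ0, hℓ⟩ => ?_).trans_lt (by norm_num)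
  norm_num at hℓ
  interval_cases ℓ <;> norm_num [rho]

theorem kappa_20_4_19 : kappa 20 4 19 = 5 := by
  refine kappa_eq_of_rhoK (by norm_num) (by norm_num)
    ((le_rhoK (ℓ := 3) (by norm_num) 5).trans' (by norm_num [rho])) ?_
  refine (rhoK_le (c := -1) (by norm_num) fun ℓ ⟨hℓ0, hℓ⟩ => ?_).trans_lt (by norm_num)
  norm_num at hℓ
  interval_cases ℓ <;> norm_num [rho]

theorem stmt14 : kappa 20 3 17 = 6 ∧ kappa 20 4 19 = 5 ∧
    kappa 20 4 19 < kappa 20 3 17 :=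
  ⟨kappa_20_3_17, kappa_20_4_19, by rw [kappa_20_3_17, kappa_20_4_19]; norm_num⟩
end
end
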